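/- Let n ≥ 2 and define Φ_n(p) = ψ(2 − 1/p) − ψ(1 + 1/p) + ψ(1 + n/p) − ψ(n + 1 − n/p), where ψ = Γ'/Γ is the digamma function. Then Φ_n(2) = 0 and Φ_n(p) > 0 for every p ∈ [1, 2). -/
import Mathlib


/-- The digamma function `ψ = Γ'/Γ`. -/
noncomputable def digamma (x : ℝ) : ℝ := deriv Real.Gamma x / Real.Gamma x

open Real Filter Topology Set

lemma diffGamma {x : ℝ} (hx : 0 < x) : DifferentiableAt ℝ Real.Gamma x :=
  Real.differentiableAt_Gamma fun m =>
    (lt_of_le_of_lt (neg_nonpos.2 (Nat.cast_nonneg m)) hx).ne'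

lemma hasDerivAt_logGamma {x : ℝ} (hx : 0 < x) :
    HasDerivAt (fun y => Real.log (Real.Gamma y)) (digamma x) x :=
  (diffGamma hx).hasDerivAt.log (Real.Gamma_pos_of_pos hx).ne'

lemma digamma_add_one {x : ℝ} (hx : 0 < x) : digamma (x + 1) = digamma x + 1 / x := by
  have h1 : HasDerivAt (fun y => Real.log (Real.Gamma (y + 1))) (digamma (x + 1) * 1) x :=
    (hasDerivAt_logGamma (by linarith)).comp x ((hasDerivAt_id x).add_const 1)
  have h2 : HasDerivAt (fun y => Real.log y + Real.log (Real.Gamma y)) (x⁻¹ + digamma x) x :=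
    (Real.hasDerivAt_log hx.ne').add (hasDerivAt_logGamma hx)
  have hev : (fun y => Real.log y + Real.log (Real.Gamma y)) =ᶠ[nhds x]
      (fun y => Real.log (Real.Gamma (y + 1))) := by
    filter_upwards [eventually_gt_nhds hx] with y hy
    rw [Real.Gamma_add_one hy.ne', Real.log_mul hy.ne' (Real.Gamma_pos_of_pos hy).ne']
  have h2' : HasDerivAt (fun y => Real.log (Real.Gamma (y + 1))) (x⁻¹ + digamma x) x :=
    h2.congr_of_eventuallyEq hev.symm
  have := h1.unique h2'
  rw [mul_one] at this
  rw [this, one_div]; ring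

lemma digamma_le_log {x : ℝ} (hx : 0 < x) : digamma x ≤ Real.log x := by
  have hc := Real.convexOn_log_Gamma
  have h := hc.le_slope_of_hasDerivAt (mem_Ioi.2 hx)
    (mem_Ioi.2 (by linarith : (0:ℝ) < x + 1)) (by linarith) (hasDerivAt_logGamma hx)
  rw [slope_def_field] at h
  have : (Real.log ∘ Real.Gamma) (x + 1) = Real.log x + (Real.log ∘ Real.Gamma) x := by
    simp only [Function.comp_apply]
    rw [Real.Gamma_add_one hx.ne', Real.log_mul hx.ne' (Real.Gamma_pos_of_pos hx).ne']
  rw [this] at h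
  calc digamma x ≤ (Real.log x + (Real.log ∘ Real.Gamma) x - (Real.log ∘ Real.Gamma) x)
        / (x + 1 - x) := h
    _ = Real.log x := by ring_nf
    
lemma log_le_digamma {x : ℝ} (hx : 1 < x) : Real.log (x - 1) ≤ digamma x := by
  have hx0 : (0:ℝ) < x := by linarith
  have hx1 : (0:ℝ) < x - 1 := by linarith
  have hc := Real.convexOn_log_Gamma
  have h := hc.slope_le_of_hasDerivAt (mem_Ioi.2 hx1) (mem_Ioi.2 hx0)
    (by linarith) (hasDerivAt_logGamma hx0)
  rw [slope_def_field] at h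
  have hg : Real.Gamma x = (x - 1) * Real.Gamma (x - 1) := by
    have := Real.Gamma_add_one hx1.ne'
    rwa [sub_add_cancel] at this
  have : (Real.log ∘ Real.Gamma) x = Real.log (x - 1) + (Real.log ∘ Real.Gamma) (x - 1) := by
    simp only [Function.comp_apply]
    rw [hg, Real.log_mul hx1.ne' (Real.Gamma_pos_of_pos hx1).ne']
  rw [this] at h
  calc Real.log (x - 1)
      = (Real.log (x - 1) + (Real.log ∘ Real.Gamma) (x - 1) - (Real.log ∘ Real.Gamma) (x - 1))
        / (x - (x - 1)) := by ring_nf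
    _ ≤ digamma x := h

lemma digamma_add_nat {x : ℝ} (hx : 0 < x) (N : ℕ) :
    digamma (x + N) = digamma x + ∑ k ∈ Finset.range N, 1 / (x + k) := by
  induction N with
  | zero => simp
  | succ N ih =>
      have hxN : (0:ℝ) < x + N := by positivity
      have : x + (N + 1 : ℕ) = (x + N) + 1 := by push_cast; ring
      rw [this, digamma_add_one hxN, ih, Finset.sum_range_succ]
      ring

lemma tendsto_digamma_diff {x y : ℝ} (hx : 0 < x) (hxy : x < y) :
    Tendsto (fun N : ℕ => digamma (y + N) - digamma (x + N)) atTop (𝓝 0) := by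
  have hy : 0 < y := hx.trans hxy
  apply tendsto_of_tendsto_of_tendsto_of_le_of_le'
    (g := fun N : ℕ => (y - 1 - x) / (y + N - 1))
    (h := fun N : ℕ => (y - x + 1) / (x + N - 1))
  · -- lower bound tendsto 0
    apply Tendsto.div_atTop tendsto_const_nhds
    apply tendsto_atTop_add_const_right
    exact tendsto_atTop_add_const_left _ _ tendsto_natCast_atTop_atTop
  · apply Tendsto.div_atTop tendsto_const_nhds
    apply tendsto_atTop_add_const_right
    exact tendsto_atTop_add_const_left _ _ tendsto_natCast_atTop_atTop
  · -- lower bound holds eventually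
    filter_upwards [eventually_ge_atTop 1] with N hN
    have hN1 : (1:ℝ) ≤ (N:ℝ) := by exact_mod_cast hN
    have h1 : (0:ℝ) < x + N := by positivity
    have h2 : (1:ℝ) < y + N := by linarith
    have hub : digamma (x + N) ≤ Real.log (x + N) := digamma_le_log h1
    have hlb : Real.log (y + N - 1) ≤ digamma (y + N) := by
      have := log_le_digamma h2; exact this
    have hlog : Real.log (y + N - 1) - Real.log (x + N) ≥ (y - 1 - x) / (y + N - 1) := by
      have hyN : (0:ℝ) < y + N - 1 := by linarith
      have : Real.log (y + N - 1) - Real.log (x + N) = Real.log ((y + N - 1) / (x + N)) := by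
        rw [Real.log_div hyN.ne' h1.ne']
      rw [this]
      have h3 : (0:ℝ) < (y + N - 1) / (x + N) := by positivity
      have := Real.one_sub_inv_le_log_of_pos h3
      have hinv : ((y + N - 1) / (x + N))⁻¹ = (x + N) / (y + N - 1) := by
        rw [inv_div]
      rw [hinv] at this
      have : 1 - (x + N) / (y + N - 1) ≤ Real.log ((y + N - 1) / (x + N)) := this
      have heq : 1 - (x + N) / (y + N - 1) = (y - 1 - x) / (y + N - 1) := by
        field_simp
        ring
      linarith [heq ▸ this]
    linarith
  · -- upper bound holds eventually
    filter_upwards [eventually_ge_atTop 1] with N hN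
    have hN1 : (1:ℝ) ≤ (N:ℝ) := by exact_mod_cast hN
    have h1 : (0:ℝ) < y + N := by positivity
    have h2 : (1:ℝ) < x + N := by linarith
    have hub : digamma (y + N) ≤ Real.log (y + N) := digamma_le_log h1
    have hlb : Real.log (x + N - 1) ≤ digamma (x + N) := log_le_digamma h2
    have hxN : (0:ℝ) < x + N - 1 := by linarith
    have hlog : Real.log (y + N) - Real.log (x + N - 1) ≤ (y - x + 1) / (x + N - 1) := by
      have : Real.log (y + N) - Real.log (x + N - 1) = Real.log ((y + N) / (x + N - 1)) := by
        rw [Real.log_div h1.ne' hxN.ne']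
      rw [this]
      have h3 : (0:ℝ) < (y + N) / (x + N - 1) := by positivity
      have := Real.log_le_sub_one_of_pos h3
      have heq : (y + N) / (x + N - 1) - 1 = (y - x + 1) / (x + N - 1) := by
        field_simp; ring
      linarith [heq ▸ this]
    linarith

lemma hasSum_digamma_sub {x y : ℝ} (hx : 0 < x) (hxy : x < y) :
    HasSum (fun k : ℕ => 1 / (x + k) - 1 / (y + k)) (digamma y - digamma x) := by
  have hy : 0 < y := hx.trans hxy
  have hnn : ∀ k : ℕ, 0 ≤ 1 / (x + k) - 1 / (y + k) := by
    intro k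
    have h1 : (0:ℝ) < x + k := by positivity
    have h2 : x + k ≤ y + k := by linarith
    have := one_div_le_one_div_of_le h1 h2
    linarith
  rw [hasSum_iff_tendsto_nat_of_nonneg hnn]
  have hps : ∀ N : ℕ, ∑ k ∈ Finset.range N, (1 / (x + k) - 1 / (y + k))
      = (digamma y - digamma x) - (digamma (y + N) - digamma (x + N)) := by
    intro N
    have h1 := digamma_add_nat hx N
    have h2 := digamma_add_nat hy N
    rw [Finset.sum_sub_distrib]
    have e1 : ∑ k ∈ Finset.range N, 1 / (x + k) = digamma (x + N) - digamma x := by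
      rw [h1]; ring
    have e2 : ∑ k ∈ Finset.range N, 1 / (y + k) = digamma (y + N) - digamma y := by
      rw [h2]; ring
    rw [e1, e2]; ring
  simp only [hps]
  have h := Filter.Tendsto.sub
    (tendsto_const_nhds : Tendsto (fun _ : ℕ => digamma y - digamma x) atTop
      (𝓝 (digamma y - digamma x)))
    (tendsto_digamma_diff hx hxy)
  simpa using h

lemma block_term {n : ℕ} (hn : 2 ≤ n) {u v : ℝ} (hu : 0 ≤ u) (huv : u < v)
    (j r : ℕ) (hr : r < n) :
    (1 / (1 + u + (j:ℝ)) - 1 / (1 + v + (j:ℝ))) / n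
      ≤ 1 / (1 + (n:ℝ) * u + ((j * n + r : ℕ) : ℝ))
        - 1 / (1 + (n:ℝ) * v + ((j * n + r : ℕ) : ℝ)) := by
  have hv : (0:ℝ) ≤ v := le_of_lt (lt_of_le_of_lt hu huv)
  have hnR : (0:ℝ) < n := by positivity
  set P : ℝ := 1 + u + (j:ℝ) with hP
  set Q : ℝ := 1 + v + (j:ℝ) with hQ
  set A : ℝ := 1 + (n:ℝ) * u + ((j * n + r : ℕ) : ℝ) with hA
  set B : ℝ := 1 + (n:ℝ) * v + ((j * n + r : ℕ) : ℝ) with hB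
  have hjnr : ((j * n + r : ℕ) : ℝ) = (j:ℝ) * n + r := by push_cast; ring
  have hP0 : 0 < P := by rw [hP]; positivity
  have hQ0 : 0 < Q := by rw [hQ]; positivity
  have hA0 : 0 < A := by rw [hA]; positivity
  have hB0 : 0 < B := by rw [hB]; positivity
  have hAP : A ≤ n * P := by
    rw [hA, hP, hjnr]
    have : (r:ℝ) + 1 ≤ n := by exact_mod_cast hr
    nlinarith
  have hBQ : B ≤ n * Q := by
    rw [hB, hQ, hjnr]
    have : (r:ℝ) + 1 ≤ n := by exact_mod_cast hr
    nlinarith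
  have e1 : 1 / P - 1 / Q = (v - u) / (P * Q) := by
    field_simp
    rw [hP, hQ]; ring
  have e2 : 1 / A - 1 / B = ((n:ℝ) * (v - u)) / (A * B) := by
    field_simp
    rw [hA, hB]; ring
  rw [e1, e2, div_div, div_le_div_iff₀ (by positivity) (by positivity)]
  have hvu : (0:ℝ) ≤ v - u := by linarith
  have hAB : A * B ≤ (n * P) * (n * Q) :=
    mul_le_mul hAP hBQ hB0.le (by positivity)
  nlinarith

lemma block_term_strict {n : ℕ} (hn : 2 ≤ n) {u v : ℝ} (hu : 0 ≤ u) (huv : u < v)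
    (j : ℕ) :
    (1 / (1 + u + (j:ℝ)) - 1 / (1 + v + (j:ℝ))) / n
      < 1 / (1 + (n:ℝ) * u + ((j * n + 0 : ℕ) : ℝ))
        - 1 / (1 + (n:ℝ) * v + ((j * n + 0 : ℕ) : ℝ)) := by
  have hv : (0:ℝ) ≤ v := le_of_lt (lt_of_le_of_lt hu huv)
  have hnR : (0:ℝ) < n := by positivity
  set P : ℝ := 1 + u + (j:ℝ) with hP
  set Q : ℝ := 1 + v + (j:ℝ) with hQ
  set A : ℝ := 1 + (n:ℝ) * u + ((j * n + 0 : ℕ) : ℝ) with hA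
  set B : ℝ := 1 + (n:ℝ) * v + ((j * n + 0 : ℕ) : ℝ) with hB
  have hjnr : ((j * n + 0 : ℕ) : ℝ) = (j:ℝ) * n := by push_cast; ring
  have hP0 : 0 < P := by rw [hP]; positivity
  have hQ0 : 0 < Q := by rw [hQ]; positivity
  have hA0 : 0 < A := by rw [hA]; positivity
  have hB0 : 0 < B := by rw [hB]; positivity
  have hn2 : (2:ℝ) ≤ n := by exact_mod_cast hn
  have hAP : A < n * P := by
    rw [hA, hP, hjnr]
    nlinarith
  have hBQ : B ≤ n * Q := by
    rw [hB, hQ, hjnr]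
    nlinarith
  have e1 : 1 / P - 1 / Q = (v - u) / (P * Q) := by
    field_simp
    rw [hP, hQ]; ring
  have e2 : 1 / A - 1 / B = ((n:ℝ) * (v - u)) / (A * B) := by
    field_simp
    rw [hA, hB]; ring
  rw [e1, e2, div_div, div_lt_div_iff₀ (by positivity) (by positivity)]
  have hvu : (0:ℝ) < v - u := by linarith
  have hAB : A * B < (n * P) * (n * Q) := by nlinarith
  nlinarith

lemma key_lt {n : ℕ} (hn : 2 ≤ n) {u v : ℝ} (hu : 0 ≤ u) (huv : u < v) :
    digamma (1 + v) - digamma (1 + u) < digamma (1 + (n:ℝ) * v) - digamma (1 + (n:ℝ) * u) := by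
  haveI : NeZero n := ⟨by omega⟩
  have hnR : (0:ℝ) < n := by positivity
  have hv : (0:ℝ) ≤ v := le_of_lt (lt_of_le_of_lt hu huv)
  set f : ℕ → ℝ := fun k => 1 / (1 + (n:ℝ) * u + k) - 1 / (1 + (n:ℝ) * v + k) with hfdef
  set g : ℕ → ℝ := fun j => 1 / (1 + u + j) - 1 / (1 + v + j) with hgdef
  have hf : HasSum f (digamma (1 + (n:ℝ) * v) - digamma (1 + (n:ℝ) * u)) :=
    hasSum_digamma_sub (by nlinarith) (by nlinarith)
  have hg : HasSum g (digamma (1 + v) - digamma (1 + u)) :=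
    hasSum_digamma_sub (by linarith) (by linarith)
  have hf' : HasSum (fun p : ℕ × Fin n => f (p.1 * n + (p.2 : ℕ)))
      (digamma (1 + (n:ℝ) * v) - digamma (1 + (n:ℝ) * u)) := by
    have := (Equiv.hasSum_iff (Nat.divModEquiv n).symm (f := f)).mpr hf
    exact this
  have hF : HasSum (fun j : ℕ => ∑ r : Fin n, f (j * n + (r : ℕ)))
      (digamma (1 + (n:ℝ) * v) - digamma (1 + (n:ℝ) * u)) :=
    hf'.prod_fiberwise fun j => hasSum_fintype _
  refine hasSum_lt (i := 0) ?_ ?_ hg hF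
  · intro j
    calc g j = ∑ _r : Fin n, g j / n := by
          rw [Finset.sum_const, Finset.card_univ, Fintype.card_fin, nsmul_eq_mul]
          field_simp
      _ ≤ ∑ r : Fin n, f (j * n + (r : ℕ)) := by
          apply Finset.sum_le_sum
          intro r _
          exact block_term hn hu huv j r r.is_lt
  · calc g 0 = ∑ _r : Fin n, g 0 / n := by
          rw [Finset.sum_const, Finset.card_univ, Fintype.card_fin, nsmul_eq_mul]
          field_simp
      _ < ∑ r : Fin n, f (0 * n + (r : ℕ)) := by
          apply Finset.sum_lt_sum
          · intro r _
            exact block_term hn hu huv 0 r r.is_lt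
          · refine ⟨0, Finset.mem_univ _, ?_⟩
            exact block_term_strict hn hu huv 0

/-- The function `Φ_n(p) = ψ(2 − 1/p) − ψ(1 + 1/p) + ψ(1 + n/p) − ψ(n + 1 − n/p)`. -/
noncomputable def Phi (n : ℕ) (p : ℝ) : ℝ :=
  digamma (2 - 1 / p) - digamma (1 + 1 / p) + digamma (1 + n / p) -
    digamma (n + 1 - n / p)

/-- For `n ≥ 2`, `Φ_n(2) = 0` and `Φ_n(p) > 0` for every `p ∈ [1, 2)`. -/
theorem Phi_eq_zero_and_pos (n : ℕ) (hn : 2 ≤ n) :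
    Phi n 2 = 0 ∧ ∀ p : ℝ, 1 ≤ p → p < 2 → 0 < Phi n p := by
  constructor
  · have h1 : (2:ℝ) - 1 / 2 = 1 + 1 / 2 := by norm_num
    have h2 : (n:ℝ) + 1 - n / 2 = 1 + n / 2 := by ring
    unfold Phi
    rw [h1, h2]
    ring
  · intro p hp1 hp2
    have hp0 : (0:ℝ) < p := by linarith
    have hvle : 1 / p ≤ 1 := by
      rw [div_le_one hp0]; linarith
    have hv2 : (1:ℝ) / 2 < 1 / p := one_div_lt_one_div_of_lt hp0 hp2
    have hkey := key_lt hn (u := 1 - 1 / p) (v := 1 / p) (by linarith) (by linarith)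
    have ePhi : Phi n p
        = (digamma (1 + (n:ℝ) * (1 / p)) - digamma (1 + 1 / p))
          - (digamma (1 + (n:ℝ) * (1 - 1 / p)) - digamma (1 + (1 - 1 / p))) := by
      unfold Phi
      have e1 : 1 + (1 - 1 / p) = 2 - 1 / p := by ring
      have e2 : 1 + (n:ℝ) * (1 / p) = 1 + n / p := by ring
      have e3 : 1 + (n:ℝ) * (1 - 1 / p) = (n:ℝ) + 1 - n / p := by ring
      rw [e1, e2, e3]
      ring
    rw [ePhi]
    linarith [hkey]
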